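/- (Sufficient descent of L during U and λ updates of FO-DMTL-ELM.) Suppose that for every t, τ_t ≥ L_t + ρ m (δ + ½) σ_{t,max} − σ/2. Then the FO-DMTL-ELM iterates satisfy, for every k ≥ 0: L(U^k, A^k, λ^k) − L(U^(k+1), A^k, λ^(k+1)) ≥ 0. -/

import Mathlib

open Matrix Filter Topology

/-- Frobenius inner product `⟨X,Y⟩ = tr(Xᵀ Y)`. -/
noncomputable def finner {α β : Type*} [Fintype α] [Fintype β]
    (X Y : Matrix α β ℝ) : ℝ := (Xᵀ * Y).trace

/-- Squared Frobenius norm `‖X‖² = tr(Xᵀ X)`. -/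
noncomputable def fnormSq {α β : Type*} [Fintype α] [Fintype β]
    (X : Matrix α β ℝ) : ℝ := finner X X

/-- Frobenius norm `‖X‖`. -/
noncomputable def fnorm {α β : Type*} [Fintype α] [Fintype β]
    (X : Matrix α β ℝ) : ℝ := Real.sqrt (fnormSq X)

section helpers
set_option linter.unusedSectionVars false
variable {α β γ : Type*} [Fintype α] [Fintype β] [Fintype γ]

lemma finner_eq_sum (X Y : Matrix α β ℝ) :
    finner X Y = ∑ p : β × α, X p.2 p.1 * Y p.2 p.1 := by
  rw [Fintype.sum_prod_type]
  simp [finner, Matrix.trace, Matrix.mul_apply, Matrix.diag]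

lemma fnormSq_eq_sum (X : Matrix α β ℝ) :
    fnormSq X = ∑ p : β × α, (X p.2 p.1) ^ 2 := by
  rw [fnormSq, finner_eq_sum]; simp [sq]

lemma fnormSq_nonneg (X : Matrix α β ℝ) : 0 ≤ fnormSq X := by
  rw [fnormSq_eq_sum]; exact Finset.sum_nonneg fun p _ => sq_nonneg _

lemma fnorm_nonneg (X : Matrix α β ℝ) : 0 ≤ fnorm X := Real.sqrt_nonneg _

lemma fnorm_mul_self (X : Matrix α β ℝ) : fnorm X * fnorm X = fnormSq X :=
  Real.mul_self_sqrt (fnormSq_nonneg X)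

lemma finner_le_fnorm (X Y : Matrix α β ℝ) : finner X Y ≤ fnorm X * fnorm Y := by
  have h := Finset.sum_mul_sq_le_sq_mul_sq Finset.univ
    (fun p : β × α => X p.2 p.1) (fun p : β × α => Y p.2 p.1)
  calc finner X Y ≤ |finner X Y| := le_abs_self _
    _ = Real.sqrt ((finner X Y) ^ 2) := (Real.sqrt_sq_eq_abs _).symm
    _ ≤ Real.sqrt (fnormSq X * fnormSq Y) := by
        apply Real.sqrt_le_sqrt
        rw [finner_eq_sum, fnormSq_eq_sum, fnormSq_eq_sum]; exact h
    _ = fnorm X * fnorm Y := Real.sqrt_mul (fnormSq_nonneg X) _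

lemma finner_comm (X Y : Matrix α β ℝ) : finner X Y = finner Y X := by
  simp [finner_eq_sum, mul_comm]

lemma finner_add_right (X Y Z : Matrix α β ℝ) :
    finner X (Y + Z) = finner X Y + finner X Z := by
  simp [finner_eq_sum, mul_add, Finset.sum_add_distrib]

lemma finner_add_left (X Y Z : Matrix α β ℝ) :
    finner (X + Y) Z = finner X Z + finner Y Z := by
  simp [finner_eq_sum, add_mul, Finset.sum_add_distrib]

lemma finner_sub_left (X Y Z : Matrix α β ℝ) :
    finner (X - Y) Z = finner X Z - finner Y Z := by
  simp [finner_eq_sum, sub_mul, Finset.sum_sub_distrib]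

lemma finner_sub_right (X Y Z : Matrix α β ℝ) :
    finner X (Y - Z) = finner X Y - finner X Z := by
  simp [finner_eq_sum, mul_sub, Finset.sum_sub_distrib]

lemma finner_smul_left (c : ℝ) (X Y : Matrix α β ℝ) :
    finner (c • X) Y = c * finner X Y := by
  simp [finner_eq_sum, Finset.mul_sum, mul_assoc]

lemma finner_smul_right (c : ℝ) (X Y : Matrix α β ℝ) :
    finner X (c • Y) = c * finner X Y := by
  rw [finner_comm, finner_smul_left, finner_comm]

lemma finner_sum_right {ι : Type*} (s : Finset ι) (X : Matrix α β ℝ)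
    (f : ι → Matrix α β ℝ) : finner X (∑ t ∈ s, f t) = ∑ t ∈ s, finner X (f t) := by
  classical
  induction s using Finset.induction with
  | empty => simp [finner_eq_sum]
  | insert _ _ h ih => rw [Finset.sum_insert h, finner_add_right, ih, Finset.sum_insert h]

lemma fnormSq_add (X Y : Matrix α β ℝ) :
    fnormSq (X + Y) = fnormSq X + 2 * finner X Y + fnormSq Y := by
  rw [fnormSq, finner_add_left, finner_add_right, finner_add_right, ← fnormSq, ← fnormSq,
    finner_comm Y X]; ring

lemma fnormSq_smul (c : ℝ) (X : Matrix α β ℝ) : fnormSq (c • X) = c ^ 2 * fnormSq X := by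
  rw [fnormSq, finner_smul_left, finner_smul_right, ← fnormSq]; ring

lemma finner_mul_left (M : Matrix α γ ℝ) (X : Matrix γ β ℝ) (Y : Matrix α β ℝ) :
    finner (M * X) Y = finner X (Mᵀ * Y) := by
  simp [finner, Matrix.transpose_mul, Matrix.mul_assoc]

lemma finner_adj (Y : Matrix α β ℝ) (M : Matrix α γ ℝ) (X : Matrix γ β ℝ) :
    finner (Mᵀ * Y) X = finner Y (M * X) := by
  rw [finner_comm Y (M * X), finner_mul_left, finner_comm, Matrix.transpose_transpose]

lemma finner_mul_right_B (X : Matrix α β ℝ) (Y : Matrix α γ ℝ) (B : Matrix γ β ℝ) :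
    finner X (Y * B) = finner (X * Bᵀ) Y := by
  simp only [finner, Matrix.transpose_mul, Matrix.transpose_transpose]
  rw [← Matrix.mul_assoc, Matrix.trace_mul_comm, Matrix.mul_assoc]

lemma finner_HXB {a b c e : Type*} [Fintype a] [Fintype b] [Fintype c] [Fintype e]
    (Hm : Matrix a b ℝ) (Y : Matrix a e ℝ) (Am : Matrix c e ℝ) (X : Matrix b c ℝ) :
    finner (Hmᵀ * Y * Amᵀ) X = finner Y (Hm * X * Am) :=
  calc finner (Hmᵀ * Y * Amᵀ) X = finner (Hmᵀ * (Y * Amᵀ)) X := by rw [Matrix.mul_assoc]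
    _ = finner (Y * Amᵀ) (Hmᵀᵀ * X) := finner_mul_left _ _ _
    _ = finner (Y * Amᵀ) (Hm * X) := by rw [Matrix.transpose_transpose]
    _ = finner Y (Hm * X * Am) := (finner_mul_right_B Y (Hm * X) Am).symm

lemma fnormSq_sum_le {ι : Type*} [Fintype ι] (f : ι → Matrix α β ℝ) :
    fnormSq (∑ t, f t) ≤ (Fintype.card ι : ℝ) * ∑ t, fnormSq (f t) := by
  classical
  simp only [fnormSq_eq_sum]
  calc ∑ p : β × α, ((∑ t, f t) p.2 p.1) ^ 2
      = ∑ p : β × α, (∑ t, f t p.2 p.1) ^ 2 := by simp [Matrix.sum_apply]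
    _ ≤ ∑ p : β × α, (Fintype.card ι : ℝ) * ∑ t, (f t p.2 p.1) ^ 2 := by
        refine Finset.sum_le_sum fun p _ => ?_
        simpa using sq_sum_le_card_mul_sum_sq (s := Finset.univ)
          (f := fun t => f t p.2 p.1)
    _ = (Fintype.card ι : ℝ) * ∑ t, ∑ p : β × α, (f t p.2 p.1) ^ 2 := by
        rw [← Finset.mul_sum, Finset.sum_comm]

end helpers

section psd
set_option linter.unusedSectionVars false
variable {n β : Type*} [Fintype n] [DecidableEq n] [Fintype β]

lemma psd_trace {M : Matrix n n ℝ} (hM : M.PosSemidef) (X : Matrix n β ℝ) :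
    0 ≤ (Xᵀ * M * X).trace := by
  rw [Matrix.trace]
  refine Finset.sum_nonneg fun j _ => ?_
  have h := hM.dotProduct_mulVec_nonneg (fun i => X i j)
  simp only [Matrix.diag_apply, Matrix.mul_apply, Matrix.transpose_apply, dotProduct,
    Matrix.mulVec, star_trivial] at h ⊢
  refine le_trans h (le_of_eq ?_)
  simp_rw [Finset.mul_sum, Finset.sum_mul]
  rw [Finset.sum_comm]
  exact Finset.sum_congr rfl fun i _ => Finset.sum_congr rfl fun l _ => (mul_assoc _ _ _).symm

lemma herm_shift_psd {M : Matrix n n ℝ} (hM : M.IsHermitian) {c : ℝ}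
    (h : ∀ i, hM.eigenvalues i ≤ c) :
    (c • (1 : Matrix n n ℝ) - M).PosSemidef := by
  set U : Matrix n n ℝ := (hM.eigenvectorUnitary : Matrix n n ℝ) with hUdef
  have hspec : M = U * diagonal hM.eigenvalues * star U := by
    simpa [Function.comp] using hM.spectral_theorem
  have hUU : U * star U = 1 := (Matrix.mem_unitaryGroup_iff).mp hM.eigenvectorUnitary.2
  have key : c • (1 : Matrix n n ℝ) - M
      = U * diagonal (fun i => c - hM.eigenvalues i) * star U := by
    have h1 : U * diagonal (fun _ : n => c) * star U = c • (1 : Matrix n n ℝ) := by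
      rw [← Matrix.smul_one_eq_diagonal, Matrix.mul_smul, mul_one, Matrix.smul_mul, hUU]
    have h2 : (diagonal fun i => c - hM.eigenvalues i)
        = (diagonal fun _ : n => c) - diagonal (fun i => hM.eigenvalues i) :=
      (Matrix.diagonal_sub _ _).symm
    rw [h2, Matrix.mul_sub, Matrix.sub_mul, h1, ← hspec]
  rw [key]
  have hdiag : (diagonal (fun i => c - hM.eigenvalues i)).PosSemidef :=
    Matrix.posSemidef_diagonal_iff.mpr fun i => sub_nonneg.mpr (h i)
  have := hdiag.mul_mul_conjTranspose_same U
  simpa [Matrix.star_eq_conjTranspose] using this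

lemma trace_quad {rr g : Type*} [Fintype rr] [Fintype g]
    (a b : ℝ) (Cc : Matrix g n ℝ) (X : Matrix n rr ℝ) :
    (Xᵀ * (a • (1 : Matrix n n ℝ) - b • (Ccᵀ * Cc)) * X).trace
      = a * fnormSq X - b * fnormSq (Cc * X) := by
  have h0 : (Xᵀ * (a • (1 : Matrix n n ℝ) - b • (Ccᵀ * Cc)) * X).trace
      = finner X ((a • (1 : Matrix n n ℝ) - b • (Ccᵀ * Cc)) * X) := by
    rw [finner, Matrix.mul_assoc]
  rw [h0, Matrix.sub_mul, Matrix.smul_mul, Matrix.one_mul, Matrix.smul_mul, Matrix.mul_assoc,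
    finner_sub_right, finner_smul_right, finner_smul_right, ← finner_mul_left, fnormSq, fnormSq]

end psd

section expand
set_option linter.unusedSectionVars false

lemma descent_aux {P Q c : ℝ} (hQ : 0 ≤ Q)
    (h : ∀ s : ℝ, P + c * Q ≤ s * P + c * (s ^ 2 * Q)) : P + 2 * c * Q ≤ 0 := by
  have key : ∀ u : ℝ, 0 < u → P + 2 * c * Q ≤ c * Q * u := by
    intro u hu
    have h1 := h (1 - u)
    have h2 : u * (P + 2 * c * Q) ≤ u * (c * Q * u) := by nlinarith [h1]
    exact le_of_mul_le_mul_left h2 hu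
  rcases le_or_gt (c * Q) 0 with hc | hc
  · have := key 1 one_pos; linarith
  · by_contra hK
    push_neg at hK
    have h3 := key ((P + 2 * c * Q) / (2 * (c * Q))) (by positivity)
    have h4 : c * Q * ((P + 2 * c * Q) / (2 * (c * Q))) = (P + 2 * c * Q) / 2 := by
      rw [mul_div_assoc', mul_comm (c * Q), mul_div_mul_right _ _ hc.ne']
    rw [h4] at h3
    linarith

lemma sub_expand {n g rr : Type*} [Fintype n] [DecidableEq n] [Fintype g] [Fintype rr]
    (Gr : Matrix n rr ℝ) (lamk : Matrix g rr ℝ) (Ct : Matrix g n ℝ) (Srest : Matrix g rr ℝ)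
    (ρ τt : ℝ) (U0 X : Matrix n rr ℝ) :
    finner Gr (U0 + X - U0) + finner lamk (Ct * (U0 + X))
      + (ρ / 2) * fnormSq (Ct * (U0 + X) + Srest)
      + (1 / 2) * ((U0 + X - U0)ᵀ * (τt • (1 : Matrix n n ℝ) - ρ • (Ctᵀ * Ct))
          * (U0 + X - U0)).trace
    = (finner lamk (Ct * U0) + (ρ / 2) * fnormSq (Ct * U0 + Srest))
      + finner (Gr + Ctᵀ * lamk + ρ • (Ctᵀ * (Ct * U0 + Srest))) X
      + (τt / 2) * fnormSq X := by
  have hX : U0 + X - U0 = X := by abel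
  have hre : Ct * U0 + Ct * X + Srest = Ct * U0 + Srest + Ct * X := by abel
  rw [hX, Matrix.mul_add, trace_quad, finner_add_right lamk, hre, fnormSq_add]
  simp only [finner_add_left, finner_smul_left, finner_adj]
  ring

lemma F_expand {a b c d' : Type*} [Fintype a] [Fintype b] [Fintype c] [Fintype d']
    (Hm : Matrix a b ℝ) (Tm : Matrix a d' ℝ) (Am : Matrix c d' ℝ) (U0 X : Matrix b c ℝ)
    (c1 c2 : ℝ) (hc : c2 = 2 * c1) :
    (1 / 2) * fnormSq (Hm * (U0 + X) * Am - Tm) + c1 * fnormSq (U0 + X)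
    = (1 / 2) * fnormSq (Hm * U0 * Am - Tm) + c1 * fnormSq U0
      + finner (Hmᵀ * (Hm * U0 * Am - Tm) * Amᵀ + c2 • U0) X
      + (1 / 2) * fnormSq (Hm * X * Am) + c1 * fnormSq X := by
  have h1 : Hm * (U0 + X) * Am - Tm = (Hm * U0 * Am - Tm) + Hm * X * Am := by
    rw [Matrix.mul_add, Matrix.add_mul]; abel
  rw [h1, fnormSq_add, fnormSq_add U0 X, finner_add_left, finner_smul_left, finner_HXB, hc]
  ring

end expand

set_option maxHeartbeats 1000000 in
/-- sufficient descent of the augmented Lagrangian during the `U` and `λ`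
updates of FO-DMTL-ELM, under `τ_t ≥ L_t + ρm(δ+½)σ_{t,max} − σ/2`. -/
theorem stmt15
    (m E L r d : ℕ) (hm : 1 ≤ m)
    (Nt : Fin m → ℕ)
    (H : ∀ t, Matrix (Fin (Nt t)) (Fin L) ℝ)
    (T : ∀ t, Matrix (Fin (Nt t)) (Fin d) ℝ)
    (C : Fin m → Matrix (Fin E × Fin L) (Fin L) ℝ)
    (μ1 μ2 ρ δ : ℝ) (hμ1 : 0 < μ1) (hμ2 : 0 < μ2) (hρ : 0 < ρ) (hδ : 0 < δ)
    (τ ζ : Fin m → ℝ)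
    -- the proximal matrices `P_t = τ_t I − ρ C_tᵀC_t` are positive semidefinite
    (hPpsd : ∀ t, (τ t • (1 : Matrix (Fin L) (Fin L) ℝ) - ρ • ((C t)ᵀ * C t)).PosSemidef)
    -- `σmax t` is the largest eigenvalue of `C_tᵀC_t`
    (σmax : Fin m → ℝ)
    (hσmax : ∀ t, IsGreatest (spectrum ℝ ((C t)ᵀ * C t)) (σmax t))
    -- `σ` is a strong-convexity modulus of `g1` and `g2`
    (σ : ℝ) (hσ0 : 0 < σ) (hσ : σ ≤ min (μ1 / (m : ℝ)) μ2)
    -- `F t U A = f_t(U,A) + g1(U) + g2(A)`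
    (F : Fin m → Matrix (Fin L) (Fin r) ℝ → Matrix (Fin r) (Fin d) ℝ → ℝ)
    (hF : ∀ t V B, F t V B = (1 / 2) * fnormSq (H t * V * B - T t)
        + (μ1 / (2 * (m : ℝ))) * fnormSq V + (μ2 / 2) * fnormSq B)
    -- the augmented Lagrangian
    (Lag : (Fin m → Matrix (Fin L) (Fin r) ℝ) → (Fin m → Matrix (Fin r) (Fin d) ℝ)
        → Matrix (Fin E × Fin L) (Fin r) ℝ → ℝ)
    (hLag : ∀ V B lm, Lag V B lm = (∑ t, F t (V t) (B t))
        + finner lm (∑ t, C t * V t) + (ρ / 2) * fnormSq (∑ t, C t * V t))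
    -- the iterates
    (U : ℕ → Fin m → Matrix (Fin L) (Fin r) ℝ)
    (A : ℕ → Fin m → Matrix (Fin r) (Fin d) ℝ)
    (lam : ℕ → Matrix (Fin E × Fin L) (Fin r) ℝ)
    (γ : ℕ → Fin E → ℝ)
    -- Lipschitz constants `L_t` for the block gradient `∇_U F_t(·, A_t^k)`
    (Lc : Fin m → ℝ) (hLc : ∀ t, 0 < Lc t)
    (hLip : ∀ (t : Fin m) (k : ℕ) (U1 U2 : Matrix (Fin L) (Fin r) ℝ),
      fnorm (((H t)ᵀ * (H t * U1 * A k t - T t) * (A k t)ᵀ + (μ1 / (m : ℝ)) • U1)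
           - ((H t)ᵀ * (H t * U2 * A k t - T t) * (A k t)ᵀ + (μ1 / (m : ℝ)) • U2))
        ≤ Lc t * fnorm (U1 - U2))
    -- (i) `U_t^(k+1)` minimizes the linearized proximal subproblem
    (hU : ∀ (k : ℕ) (t : Fin m) (V : Matrix (Fin L) (Fin r) ℝ),
      finner ((H t)ᵀ * (H t * U k t * A k t - T t) * (A k t)ᵀ + (μ1 / (m : ℝ)) • U k t)
          (U (k + 1) t - U k t)
        + finner (lam k) (C t * U (k + 1) t)
        + (ρ / 2) * fnormSq (C t * U (k + 1) t + ∑ i ∈ Finset.univ.erase t, C i * U k i)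
        + (1 / 2) * ((U (k + 1) t - U k t)ᵀ
            * (τ t • (1 : Matrix (Fin L) (Fin L) ℝ) - ρ • ((C t)ᵀ * C t))
            * (U (k + 1) t - U k t)).trace
      ≤ finner ((H t)ᵀ * (H t * U k t * A k t - T t) * (A k t)ᵀ + (μ1 / (m : ℝ)) • U k t)
          (V - U k t)
        + finner (lam k) (C t * V)
        + (ρ / 2) * fnormSq (C t * V + ∑ i ∈ Finset.univ.erase t, C i * U k i)
        + (1 / 2) * ((V - U k t)ᵀ
            * (τ t • (1 : Matrix (Fin L) (Fin L) ℝ) - ρ • ((C t)ᵀ * C t))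
            * (V - U k t)).trace)
    -- step-size condition for `γ_i^(k+1)`:
    -- `0 < γ_i^(k+1)` and `γ_i^(k+1) ‖Ĉ_i U^(k+1)‖² ≤ δ ‖Ĉ_i (U^k − U^(k+1))‖²`
    (hγ : ∀ (k : ℕ) (i : Fin E), 0 < γ (k + 1) i ∧
      γ (k + 1) i * fnormSq (∑ t, (C t).submatrix (fun j : Fin L => (i, j)) id * U (k + 1) t)
        ≤ δ * fnormSq (∑ t, (C t).submatrix (fun j : Fin L => (i, j)) id
            * (U k t - U (k + 1) t)))
    -- (ii) dual update `λ^(k+1) = λ^k − ρ γ^(k+1) Σ_t C_t U_t^(k+1)`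
    (hlam : ∀ k : ℕ, lam (k + 1) = lam k
        - ρ • Matrix.of (fun (p : Fin E × Fin L) (j : Fin r) =>
            γ (k + 1) p.1 * (∑ t, C t * U (k + 1) t) p j))
    -- (iii) `A_t^(k+1)` minimizes `A ↦ F_t(U_t^(k+1), A) + ½‖A − A_t^k‖_{Q_t}²`
    (hA : ∀ (k : ℕ) (t : Fin m) (B : Matrix (Fin r) (Fin d) ℝ),
      F t (U (k + 1) t) (A (k + 1) t) + (ζ t / 2) * fnormSq (A (k + 1) t - A k t)
      ≤ F t (U (k + 1) t) B + (ζ t / 2) * fnormSq (B - A k t))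
    (hτ : ∀ t, Lc t + ρ * (m : ℝ) * (δ + 1 / 2) * σmax t - σ / 2 ≤ τ t)
 :
    ∀ k : ℕ, Lag (U k) (A k) (lam k) - Lag (U (k + 1)) (A k) (lam (k + 1)) ≥ 0 := by
  intro k
  have hm0 : (m : ℝ) ≠ 0 := Nat.cast_ne_zero.mpr (by omega)
  -- abbreviations
  set D : Fin m → Matrix (Fin L) (Fin r) ℝ := fun t => U (k + 1) t - U k t with hD
  have hU1 : ∀ t, U (k + 1) t = U k t + D t := fun t => by simp only [hD]; abel
  set S : Matrix (Fin E × Fin L) (Fin r) ℝ := ∑ t, C t * U k t with hS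
  set S' : Matrix (Fin E × Fin L) (Fin r) ℝ := ∑ t, C t * U (k + 1) t with hS'
  set sd : Matrix (Fin E × Fin L) (Fin r) ℝ := ∑ t, C t * D t with hsd
  set Gr : Fin m → Matrix (Fin L) (Fin r) ℝ := fun t =>
    (H t)ᵀ * (H t * U k t * A k t - T t) * (A k t)ᵀ + (μ1 / (m : ℝ)) • U k t with hGr
  have hGrt : ∀ t, Gr t
      = (H t)ᵀ * (H t * U k t * A k t - T t) * (A k t)ᵀ + (μ1 / (m : ℝ)) • U k t :=
    fun t => rfl
  set G : Fin m → Matrix (Fin L) (Fin r) ℝ := fun t =>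
    Gr t + (C t)ᵀ * lam k + ρ • ((C t)ᵀ * S) with hG
  have hGt : ∀ t, G t = Gr t + (C t)ᵀ * lam k + ρ • ((C t)ᵀ * S) := fun t => rfl
  set e : Fin m → ℝ := fun t =>
    (1 / 2) * fnormSq (H t * D t * A k t) + (μ1 / (2 * (m : ℝ))) * fnormSq (D t) with he
  have het : ∀ t, e t
      = (1 / 2) * fnormSq (H t * D t * A k t) + (μ1 / (2 * (m : ℝ))) * fnormSq (D t) :=
    fun t => rfl
  -- S' = S + sd
  have hS'S : S' = S + sd := by
    rw [hS', hS, hsd, ← Finset.sum_add_distrib]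
    exact Finset.sum_congr rfl fun t _ => by rw [hU1 t, Matrix.mul_add]
  -- Step 1: the λ-update term is nonnegative
  have hlamterm : 0 ≤ finner (lam k) S' - finner (lam (k + 1)) S' := by
    have h1 : lam k - lam (k + 1) = ρ • Matrix.of (fun (p : Fin E × Fin L) (j : Fin r) =>
        γ (k + 1) p.1 * S' p j) := by
      rw [hlam k, sub_sub_cancel]
      try simp only [← hS']
    rw [← finner_sub_left, h1, finner_smul_left, finner_eq_sum]
    refine mul_nonneg hρ.le (Finset.sum_nonneg fun q _ => ?_)
    simp only [Matrix.of_apply]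
    rw [mul_assoc]
    exact mul_nonneg (hγ k q.2.1).1.le (mul_self_nonneg _)
  -- Step 2: per-block strengthened minimizer inequality
  have key2 : ∀ t, finner (G t) (D t) + τ t * fnormSq (D t) ≤ 0 := by
    intro t
    have hCS : C t * U k t + (∑ i ∈ Finset.univ.erase t, C i * U k i) = S := by
      rw [hS]
      exact Finset.add_sum_erase _ (fun i => C i * U k i) (Finset.mem_univ t)
    have hAll : ∀ s : ℝ, finner (G t) (D t) + (τ t / 2) * fnormSq (D t)
        ≤ s * finner (G t) (D t) + (τ t / 2) * (s ^ 2 * fnormSq (D t)) := by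
      intro s
      have h := hU k t (U k t + s • D t)
      rw [hU1 t] at h
      rw [sub_expand ((H t)ᵀ * (H t * U k t * A k t - T t) * (A k t)ᵀ
            + (μ1 / (m : ℝ)) • U k t) (lam k) (C t)
            (∑ i ∈ Finset.univ.erase t, C i * U k i) ρ (τ t) (U k t) (D t),
          sub_expand ((H t)ᵀ * (H t * U k t * A k t - T t) * (A k t)ᵀ
            + (μ1 / (m : ℝ)) • U k t) (lam k) (C t)
            (∑ i ∈ Finset.univ.erase t, C i * U k i) ρ (τ t) (U k t) (s • D t)] at h
      rw [hCS, ← hGrt t, ← hGt t, finner_smul_right, fnormSq_smul] at h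
      linarith
    have hfin := descent_aux (fnormSq_nonneg (D t)) hAll
    linarith
  -- Step 3: expansion of F along the U-update
  have hF3 : ∀ t, F t (U (k + 1) t) (A k t)
      = F t (U k t) (A k t) + finner (Gr t) (D t) + e t := by
    intro t
    have hc : (μ1 / (m : ℝ)) = 2 * (μ1 / (2 * (m : ℝ))) := by
      field_simp
      try ring
    have hexp := F_expand (H t) (T t) (A k t) (U k t) (D t)
      (μ1 / (2 * (m : ℝ))) (μ1 / (m : ℝ)) hc
    rw [hU1 t]
    simp only [hF]
    rw [← hGrt t] at hexp
    rw [het t]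
    linarith
  -- Step 4: bound on the quadratic excess
  have hq : ∀ t, fnormSq (H t * D t * A k t) + (μ1 / (m : ℝ)) * fnormSq (D t)
      ≤ Lc t * fnormSq (D t) := by
    intro t
    have hW := hLip t k (U (k + 1) t) (U k t)
    have hWid : ((H t)ᵀ * (H t * U (k + 1) t * A k t - T t) * (A k t)ᵀ
          + (μ1 / (m : ℝ)) • U (k + 1) t)
        - ((H t)ᵀ * (H t * U k t * A k t - T t) * (A k t)ᵀ + (μ1 / (m : ℝ)) • U k t)
        = (H t)ᵀ * (H t * D t * A k t) * (A k t)ᵀ + (μ1 / (m : ℝ)) • D t := by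
      have h2 : H t * (U k t + D t) * A k t - T t
          = (H t * U k t * A k t - T t) + H t * D t * A k t := by
        rw [Matrix.mul_add, Matrix.add_mul]; abel
      rw [hU1 t, h2, Matrix.mul_add ((H t)ᵀ), Matrix.add_mul, smul_add]
      abel
    have hDt : U (k + 1) t - U k t = D t := rfl
    rw [hWid, hDt] at hW
    have hfin : fnormSq (H t * D t * A k t) + (μ1 / (m : ℝ)) * fnormSq (D t)
        = finner ((H t)ᵀ * (H t * D t * A k t) * (A k t)ᵀ + (μ1 / (m : ℝ)) • D t) (D t) := by
      rw [finner_add_left, finner_smul_left, finner_HXB]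
      rfl
    rw [hfin]
    calc finner ((H t)ᵀ * (H t * D t * A k t) * (A k t)ᵀ + (μ1 / (m : ℝ)) • D t) (D t)
        ≤ fnorm ((H t)ᵀ * (H t * D t * A k t) * (A k t)ᵀ + (μ1 / (m : ℝ)) • D t)
          * fnorm (D t) := finner_le_fnorm _ _
      _ ≤ (Lc t * fnorm (D t)) * fnorm (D t) :=
          mul_le_mul_of_nonneg_right hW (fnorm_nonneg _)
      _ = Lc t * fnormSq (D t) := by rw [mul_assoc, fnorm_mul_self]
  -- Step 5: spectral bound
  have hC : ∀ t, fnormSq (C t * D t) ≤ σmax t * fnormSq (D t) := by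
    intro t
    have hherm : ((C t)ᵀ * C t).IsHermitian := by
      show ((C t)ᵀ * C t)ᴴ = (C t)ᵀ * C t
      ext i j
      simp [Matrix.conjTranspose_apply, Matrix.mul_apply, mul_comm]
    have heig : ∀ i, hherm.eigenvalues i ≤ σmax t :=
      fun i => (hσmax t).2 (hherm.eigenvalues_mem_spectrum_real i)
    have hpsd := herm_shift_psd hherm heig
    have h0 := psd_trace hpsd (D t)
    rw [← one_smul ℝ ((C t)ᵀ * C t), trace_quad] at h0
    linarith
  -- Step 6: per-block final bound
  have final : ∀ t, 0 ≤ τ t * fnormSq (D t) - e t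
      - (ρ * (m : ℝ) / 2) * fnormSq (C t * D t) := by
    intro t
    have h1 : (Lc t + ρ * (m : ℝ) * (δ + 1 / 2) * σmax t - σ / 2) * fnormSq (D t)
        ≤ τ t * fnormSq (D t) :=
      mul_le_mul_of_nonneg_right (hτ t) (fnormSq_nonneg _)
    have h2 : (ρ * (m : ℝ) / 2) * fnormSq (C t * D t)
        ≤ (ρ * (m : ℝ) / 2) * (σmax t * fnormSq (D t)) :=
      mul_le_mul_of_nonneg_left (hC t) (by positivity)
    have h3 : 0 ≤ (ρ * (m : ℝ) * δ) * (σmax t * fnormSq (D t)) :=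
      mul_nonneg (by positivity) (le_trans (fnormSq_nonneg _) (hC t))
    have h4 : σ * fnormSq (D t) ≤ (μ1 / (m : ℝ)) * fnormSq (D t) :=
      mul_le_mul_of_nonneg_right (le_trans hσ (min_le_left _ _)) (fnormSq_nonneg _)
    have h5 := hq t
    have h6 := fnormSq_nonneg (H t * D t * A k t)
    have h7 : μ1 / (2 * (m : ℝ)) = 1 / 2 * (μ1 / (m : ℝ)) := by
      field_simp
      try ring
    rw [het t, h7]
    nlinarith [h1, h2, h3, h4, h5, h6]
  -- Assembly
  have hLagA : Lag (U k) (A k) (lam k)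
      = (∑ t, F t (U k t) (A k t)) + finner (lam k) S + (ρ / 2) * fnormSq S := by
    rw [hLag, ← hS]
  have hLagB : Lag (U (k + 1)) (A k) (lam (k + 1))
      = (∑ t, F t (U (k + 1) t) (A k t)) + finner (lam (k + 1)) S'
        + (ρ / 2) * fnormSq S' := by
    rw [hLag, ← hS']
  have hsumF : ∑ t, F t (U (k + 1) t) (A k t)
      = (∑ t, F t (U k t) (A k t)) + ∑ t, (finner (Gr t) (D t) + e t) := by
    rw [← Finset.sum_add_distrib]
    exact Finset.sum_congr rfl fun t _ => by rw [hF3 t]; ring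
  have hfinadj1 : finner (lam k) sd = ∑ t, finner ((C t)ᵀ * lam k) (D t) := by
    rw [hsd, finner_sum_right]
    exact Finset.sum_congr rfl fun t _ => (finner_adj _ _ _).symm
  have hfinadj2 : finner S sd = ∑ t, finner ((C t)ᵀ * S) (D t) := by
    rw [hsd, finner_sum_right]
    exact Finset.sum_congr rfl fun t _ => (finner_adj _ _ _).symm
  have hnorm : fnormSq S' = fnormSq S + 2 * finner S sd + fnormSq sd := by
    rw [hS'S, fnormSq_add]
  have hlin : finner (lam k) S' = finner (lam k) S + finner (lam k) sd := by
    rw [hS'S, finner_add_right]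
  have hsum2 : ∑ t, (finner (Gr t) (D t) + e t)
      = (∑ t, (finner (G t) (D t) + e t)) - finner (lam k) sd - ρ * finner S sd := by
    rw [hfinadj1, hfinadj2, Finset.mul_sum, ← Finset.sum_sub_distrib, ← Finset.sum_sub_distrib]
    refine Finset.sum_congr rfl fun t _ => ?_
    rw [hGt t,
      finner_add_left (Gr t + (C t)ᵀ * lam k) (ρ • ((C t)ᵀ * S)) (D t),
      finner_add_left (Gr t) ((C t)ᵀ * lam k) (D t), finner_smul_left]
    ring
  have hsum3 : ∑ t, (finner (G t) (D t) + e t)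
      ≤ ∑ t, (-(τ t * fnormSq (D t)) + e t) :=
    Finset.sum_le_sum fun t _ => by linarith [key2 t]
  have hsd_bound : fnormSq sd ≤ (m : ℝ) * ∑ t, fnormSq (C t * D t) := by
    rw [hsd]
    simpa using fnormSq_sum_le (fun t => C t * D t)
  have hsplit : (ρ / 2) * ((m : ℝ) * ∑ t, fnormSq (C t * D t))
      = ∑ t, (ρ * (m : ℝ) / 2) * fnormSq (C t * D t) := by
    rw [Finset.mul_sum, Finset.mul_sum]
    exact Finset.sum_congr rfl fun t _ => by ring
  have hsum4 : (∑ t, (-(τ t * fnormSq (D t)) + e t))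
      + (ρ / 2) * ((m : ℝ) * ∑ t, fnormSq (C t * D t)) ≤ 0 := by
    rw [hsplit, ← Finset.sum_add_distrib]
    refine Finset.sum_nonpos fun t _ => ?_
    have := final t
    linarith
  have hsd2 : (ρ / 2) * fnormSq sd ≤ (ρ / 2) * ((m : ℝ) * ∑ t, fnormSq (C t * D t)) :=
    mul_le_mul_of_nonneg_left hsd_bound (by positivity)
  have hnorm' : (ρ / 2) * fnormSq S'
      = (ρ / 2) * fnormSq S + ρ * finner S sd + (ρ / 2) * fnormSq sd := by
    rw [hnorm]; ring
  rw [ge_iff_le, hLagA, hLagB, hsumF]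
  linarith [hlamterm, hsum2, hsum3, hsum4, hsd2, hnorm', hlin]
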